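/- Let M be a Noetherian R_d-module and let H = H_v be a half-space in ℝ^d. If the algebraic ℤ^d-action α_M on X_M is expansive along H, then M is R_H-Noetherian. -/

import Mathlib

open scoped RealInnerProductSpace

noncomputable section

/-- Euclidean space `ℝ^d`. -/
abbrev Rspace (d : ℕ) : Type := EuclideanSpace ℝ (Fin d)

/-- The natural embedding `ℤ^d → ℝ^d`. -/
def intVec {d : ℕ} (n : Fin d → ℤ) : Rspace d := WithLp.toLp 2 (fun i => (n i : ℝ))

/-- The ring `R_d = ℤ[u₁^{±1}, …, u_d^{±1}]` of Laurent polynomials with integer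
coefficients, realized as the group algebra of `ℤ^d` over `ℤ`. -/
abbrev LaurentRing (d : ℕ) : Type := AddMonoidAlgebra ℤ (Fin d → ℤ)

/-- The monomial `u^n` in `R_d`. -/
def mono {d : ℕ} (n : Fin d → ℤ) : LaurentRing d := AddMonoidAlgebra.single n 1

/-- The subring `R_H = ℤ[u^n : n·v ≤ 0]` of `R_d` attached to the half-space
`H_v = {x : x·v ≤ 0}`. -/
def RH {d : ℕ} (v : Rspace d) : Subring (LaurentRing d) :=
  Subring.closure {f : LaurentRing d | ∃ n : Fin d → ℤ, ⟪intVec n, v⟫ ≤ 0 ∧ f = mono n}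

/-- An `R_d`-module `M` is Noetherian over a subring `S ⊆ R_d` if it satisfies the
ascending chain condition for `S`-submodules (equivalently, all `S`-submodules are
finitely generated). -/
def NoetherianOver {d : ℕ} (S : Subring (LaurentRing d)) (M : Type*) [AddCommGroup M]
    [Module (LaurentRing d) M] : Prop :=
  letI : Module S M := Module.compHom M S.subtype
  IsNoetherian S M

/-- The Pontryagin dual `X_M` of a countable discrete abelian group `M` is realized as
the group `M →+ ℝ/ℤ` of additive characters, with the topology of pointwise
convergence. -/
instance charTopology (M : Type*) [AddCommGroup M] :
    TopologicalSpace (M →+ AddCircle (1 : ℝ)) :=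
  TopologicalSpace.induced (fun χ => (χ : M → AddCircle (1 : ℝ))) inferInstance

/-- The automorphism `α_M^n` of `X_M` dual to multiplication by `u^n` on `M`. -/
def dualAut {d : ℕ} (M : Type*) [AddCommGroup M] [Module (LaurentRing d) M]
    (n : Fin d → ℤ) (χ : M →+ AddCircle (1 : ℝ)) : M →+ AddCircle (1 : ℝ) :=
  χ.comp (DistribMulAction.toAddMonoidHom M (mono (d := d) n))

/-- `ρ` is a translation-invariant metric on the topological abelian group `X`
inducing its topology. -/
structure IsCompatibleInvariantMetric (X : Type*) [TopologicalSpace X] [AddCommGroup X]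
    (ρ : X → X → ℝ) : Prop where
  symm : ∀ x y, ρ x y = ρ y x
  eq_iff : ∀ x y, ρ x y = 0 ↔ x = y
  triangle : ∀ x y z, ρ x z ≤ ρ x y + ρ y z
  invariant : ∀ a x y, ρ (a + x) (a + y) = ρ x y
  compatible : ∀ s : Set X, IsOpen s ↔ ∀ x ∈ s, ∃ ε > 0, {y | ρ x y < ε} ⊆ s

/-- The algebraic `ℤ^d`-action `α_M` on `X_M` is expansive along the half-space
`H_v = {x : x·v ≤ 0}`, with respect to the metric `ρ` on `X_M`: there is an `ε > 0`
such that `sup {ρ(α_M^n x, α_M^n y) : n ∈ H_v ∩ ℤ^d} ≤ ε` forces `x = y`. -/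
def DualExpansiveHalf {d : ℕ} (M : Type*) [AddCommGroup M] [Module (LaurentRing d) M]
    (ρ : (M →+ AddCircle (1 : ℝ)) → (M →+ AddCircle (1 : ℝ)) → ℝ) (v : Rspace d) : Prop :=
  ∃ ε > 0, ∀ χ ψ : M →+ AddCircle (1 : ℝ),
    (∀ n : Fin d → ℤ, ⟪intVec n, v⟫ ≤ 0 → ρ (dualAut M n χ) (dualAut M n ψ) ≤ ε) → χ = ψ

/-! ### Auxiliary lemmas -/

lemma mono_mul {d : ℕ} (m n : Fin d → ℤ) : mono m * mono n = mono (m + n) := by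
  simp [mono, AddMonoidAlgebra.single_mul_single]

lemma mono_zero {d : ℕ} : mono (0 : Fin d → ℤ) = 1 := by
  simp [mono, AddMonoidAlgebra.one_def]

lemma intVec_add {d : ℕ} (m n : Fin d → ℤ) : intVec (m + n) = intVec m + intVec n := by
  ext i; show ((m i + n i : ℤ) : ℝ) = _; push_cast; rfl

lemma intVec_zero {d : ℕ} : intVec (0 : Fin d → ℤ) = 0 := by
  ext i; show ((0:ℤ):ℝ) = _; simp

lemma inner_intVec {d : ℕ} (n : Fin d → ℤ) (v : Rspace d) :
    ⟪intVec n, v⟫ = ∑ i, (n i : ℝ) * v i := by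
  simp [PiLp.inner_apply, intVec, RCLike.inner_apply, conj_trivial, mul_comm]

lemma phi_add {d : ℕ} (m n : Fin d → ℤ) (v : Rspace d) :
    ⟪intVec (m + n), v⟫ = ⟪intVec m, v⟫ + ⟪intVec n, v⟫ := by
  rw [intVec_add, inner_add_left]

lemma phi_sub {d : ℕ} (m n : Fin d → ℤ) (v : Rspace d) :
    ⟪intVec (m - n), v⟫ = ⟪intVec m, v⟫ - ⟪intVec n, v⟫ := by
  have := phi_add (m - n) n v
  rw [sub_add_cancel] at this
  linarith

lemma phi_zero {d : ℕ} (v : Rspace d) : ⟪intVec (0 : Fin d → ℤ), v⟫ = 0 := by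
  rw [intVec_zero, inner_zero_left]

lemma abs_coord_le_one {d : ℕ} {v : Rspace d} (hv : ‖v‖ = 1) (i : Fin d) : |v i| ≤ 1 := by
  have h := abs_real_inner_le_norm (EuclideanSpace.single i (1:ℝ)) v
  rw [EuclideanSpace.norm_single, hv] at h
  simpa [EuclideanSpace.inner_single_left] using h

def N1 {d : ℕ} (n : Fin d → ℤ) : ℝ := ∑ i, |(n i : ℝ)|

lemma N1_nonneg {d : ℕ} (n : Fin d → ℤ) : 0 ≤ N1 n :=
  Finset.sum_nonneg fun _ _ => abs_nonneg _

lemma coord_le_N1 {d : ℕ} (n : Fin d → ℤ) (i : Fin d) : |(n i : ℝ)| ≤ N1 n :=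
  Finset.single_le_sum (fun j _ => abs_nonneg ((n j : ℝ))) (Finset.mem_univ i)

lemma N1_add_le {d : ℕ} (m n : Fin d → ℤ) : N1 (m + n) ≤ N1 m + N1 n := by
  rw [N1, show N1 m + N1 n = ∑ i, (|(m i : ℝ)| + |(n i : ℝ)|) from (Finset.sum_add_distrib).symm]
  refine Finset.sum_le_sum fun i _ => ?_
  show |((m i + n i : ℤ) : ℝ)| ≤ _
  push_cast
  exact abs_add_le _ _

lemma N1_neg {d : ℕ} (n : Fin d → ℤ) : N1 (-n) = N1 n := by
  rw [N1, N1]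
  refine Finset.sum_congr rfl fun i _ => ?_
  show |((-(n i) : ℤ) : ℝ)| = _
  push_cast
  rw [abs_neg]

lemma one_le_N1 {d : ℕ} {n : Fin d → ℤ} (hn : n ≠ 0) : 1 ≤ N1 n := by
  obtain ⟨i, hi⟩ : ∃ i, n i ≠ 0 := by
    by_contra h
    push_neg at h
    exact hn (funext h)
  calc (1:ℝ) ≤ |(n i : ℝ)| := by
        have : (1:ℤ) ≤ |n i| := Int.one_le_abs hi
        calc (1:ℝ) = ((1:ℤ):ℝ) := by norm_num
        _ ≤ ((|n i| : ℤ) : ℝ) := by exact_mod_cast this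
        _ = |(n i : ℝ)| := by push_cast; ring
    _ ≤ N1 n := coord_le_N1 n i

lemma finite_N1_le {d : ℕ} (B : ℝ) : {g : Fin d → ℤ | N1 g ≤ B}.Finite := by
  have hsub : {g : Fin d → ℤ | N1 g ≤ B} ⊆
      Set.pi Set.univ (fun _ : Fin d => (Set.Icc (-⌈B⌉) ⌈B⌉ : Set ℤ)) := by
    intro g hg i _
    have h1 : |(g i : ℝ)| ≤ B := le_trans (coord_le_N1 g i) hg
    have h2 : ((|g i| : ℤ) : ℝ) ≤ (⌈B⌉ : ℝ) := by
      calc ((|g i| : ℤ) : ℝ) = |(g i : ℝ)| := by push_cast; ring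
      _ ≤ B := h1
      _ ≤ ⌈B⌉ := Int.le_ceil B
    have h3 : |g i| ≤ ⌈B⌉ := by exact_mod_cast h2
    exact abs_le.1 h3
  exact Set.Finite.subset (Set.Finite.pi fun _ => Set.finite_Icc _ _) hsub

lemma phi_single {d : ℕ} (v : Rspace d) (i₀ : Fin d) (t : ℤ) :
    ⟪intVec (Pi.single i₀ t), v⟫ = (t : ℝ) * v i₀ := by
  rw [inner_intVec]
  rw [Finset.sum_eq_single i₀]
  · rw [Pi.single_eq_same]
  · intro i _ hi
    rw [Pi.single_eq_of_ne hi]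
    simp
  · intro h
    exact absurd (Finset.mem_univ i₀) h

lemma N1_single {d : ℕ} (i₀ : Fin d) (t : ℤ) : N1 (Pi.single i₀ t) = |(t : ℝ)| := by
  rw [N1]
  rw [Finset.sum_eq_single i₀]
  · rw [Pi.single_eq_same]
  · intro i _ hi
    rw [Pi.single_eq_of_ne hi]
    simp
  · intro h
    exact absurd (Finset.mem_univ i₀) h

section dual
variable {d : ℕ} {M : Type*} [AddCommGroup M] [Module (LaurentRing d) M]

lemma dualAut_apply (n : Fin d → ℤ) (χ : M →+ AddCircle (1:ℝ)) (x : M) :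
    dualAut M n χ x = χ (mono n • x) := rfl

lemma dualAut_dualAut (n e : Fin d → ℤ) (χ : M →+ AddCircle (1:ℝ)) :
    dualAut M e (dualAut M n χ) = dualAut M (n + e) χ := by
  ext x
  simp only [dualAut_apply, smul_smul, mono_mul]

lemma dualAut_zero_char (n : Fin d → ℤ) : dualAut M n (0 : M →+ AddCircle (1:ℝ)) = 0 := by
  ext x; rfl

lemma dualAut_eq_zero {e : Fin d → ℤ} {χ : M →+ AddCircle (1:ℝ)}
    (h : dualAut M e χ = 0) : χ = 0 := by
  ext x
  have := congrArg (fun ψ => ψ (mono (-e) • x)) h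
  simpa [dualAut_apply, smul_smul, mono_mul, mono_zero] using this

lemma dualAut_continuous (n : Fin d → ℤ) :
    Continuous (dualAut M n : (M →+ AddCircle (1:ℝ)) → (M →+ AddCircle (1:ℝ))) := by
  apply continuous_induced_rng.2
  exact continuous_pi fun m => (continuous_apply (mono n • m)).comp continuous_induced_dom

lemma compactX : CompactSpace (M →+ AddCircle (1:ℝ)) := by
  haveI : Fact ((0:ℝ) < 1) := ⟨one_pos⟩
  have hrange : Set.range (fun χ : M →+ AddCircle (1:ℝ) => (χ : M → AddCircle (1:ℝ)))
      = {f : M → AddCircle (1:ℝ) | ∀ a b, f (a + b) = f a + f b} := by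
    ext f
    constructor
    · rintro ⟨χ, rfl⟩ a b; exact χ.map_add a b
    · intro hf; exact ⟨AddMonoidHom.mk' f hf, rfl⟩
  have hclosed : IsClosed (Set.range (fun χ : M →+ AddCircle (1:ℝ) => (χ : M → AddCircle (1:ℝ)))) := by
    rw [hrange]
    have : {f : M → AddCircle (1:ℝ) | ∀ a b, f (a + b) = f a + f b}
        = ⋂ (a : M) (b : M), {f : M → AddCircle (1:ℝ) | f (a + b) = f a + f b} := by
      ext f; simp
    rw [this]
    exact isClosed_iInter fun a => isClosed_iInter fun b =>
      isClosed_eq (continuous_apply (a + b)) ((continuous_apply a).add (continuous_apply b))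
  have hemb : Topology.IsClosedEmbedding (fun χ : M →+ AddCircle (1:ℝ) => (χ : M → AddCircle (1:ℝ))) := by
    refine ⟨⟨⟨rfl⟩, fun χ ψ h => ?_⟩, hclosed⟩
    ext x; exact congrFun h x
  exact hemb.compactSpace

end dual

lemma exists_real_char {A : Type*} [AddCommGroup A] {a : A} (ha : a ≠ 0) :
    ∃ χ : A →+ AddCircle (1:ℝ), χ a ≠ 0 := by
  obtain ⟨c, hc⟩ := CharacterModule.exists_character_apply_ne_zero_of_ne_zero ha
  have hle : AddSubgroup.zmultiples (1:ℚ) ≤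
      (AddSubgroup.zmultiples (1:ℝ)).comap (Rat.castHom ℝ).toAddMonoidHom := by
    rintro x ⟨n, rfl⟩
    exact ⟨n, by push_cast; simp⟩
  let e : AddCircle (1:ℚ) →+ AddCircle (1:ℝ) :=
    QuotientAddGroup.map _ _ (Rat.castHom ℝ).toAddMonoidHom hle
  have he : Function.Injective e := by
    rw [injective_iff_map_eq_zero]
    intro x hx
    induction x using QuotientAddGroup.induction_on with
    | H q =>
      have : ((q : ℝ) : AddCircle (1:ℝ)) = 0 := hx
      rw [AddCircle.coe_eq_zero_iff] at this ⊢
      obtain ⟨n, hn⟩ := this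
      rw [zsmul_one] at hn
      refine ⟨n, ?_⟩
      rw [zsmul_one]
      exact_mod_cast hn
  refine ⟨e.comp (c : A →+ AddCircle (1:ℚ)), fun h => hc ?_⟩
  have : e (c a) = 0 := h
  rw [← map_zero e] at this
  exact he this

namespace IsCompatibleInvariantMetric
variable {X : Type*} [TopologicalSpace X] [AddCommGroup X] {ρ : X → X → ℝ}
  (h : IsCompatibleInvariantMetric X ρ)
include h

lemma nonneg (x y : X) : 0 ≤ ρ x y := by
  have h0 : ρ x x = 0 := (h.eq_iff x x).2 rfl
  have := h.triangle x y x
  rw [h0, h.symm y x] at this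
  linarith

lemma isOpen_ball (z : X) (ε : ℝ) : IsOpen {y | ρ z y < ε} := by
  rw [h.compatible]
  intro x hx
  refine ⟨ε - ρ z x, by simpa using hx, fun y hy => ?_⟩
  have := h.triangle z x y
  simp only [Set.mem_setOf_eq] at hy ⊢
  linarith

lemma isClosed_cball (z : X) (ε : ℝ) : IsClosed {y | ρ z y ≤ ε} := by
  rw [← isOpen_compl_iff, h.compatible]
  intro x hx
  simp only [Set.mem_compl_iff, Set.mem_setOf_eq, not_le] at hx
  refine ⟨ρ z x - ε, by linarith, fun y hy => ?_⟩
  simp only [Set.mem_setOf_eq] at hy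
  simp only [Set.mem_compl_iff, Set.mem_setOf_eq, not_le]
  have h1 := h.triangle z y x
  have h2 : ρ y x = ρ x y := h.symm y x
  linarith

end IsCompatibleInvariantMetric

set_option maxHeartbeats 2000000 in
lemma cone_generation {d : ℕ} (v : Rspace d) (hv : ‖v‖ = 1) (i₀ : Fin d) (η : ℝ)
    (hη0 : 0 < η) (hβ : 2 * η ≤ |v i₀|) :
    ∃ G : Set (Fin d → ℤ), G.Finite ∧ (∀ g ∈ G, ⟪intVec g, v⟫ < 0) ∧
      ∀ n : Fin d → ℤ, n ≠ 0 → ⟪intVec n, v⟫ ≤ -η * N1 n → n ∈ AddSubmonoid.closure G := by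
  set β := |v i₀| with hβdef
  have hβ0 : 0 < β := lt_of_lt_of_le (by linarith) hβ
  have hβ1 : β ≤ 1 := abs_coord_le_one hv i₀
  have hη1 : η ≤ 1 / 2 := by linarith
  -- choose the tilting vector
  set s : ℤ := if 0 ≤ v i₀ then 1 else -1 with hsdef
  have hsv : (s : ℝ) * v i₀ = β := by
    by_cases h : 0 ≤ v i₀
    · simp [hsdef, h, hβdef, abs_of_nonneg h]
    · push_neg at h
      simp [hsdef, not_le.mpr h, hβdef, abs_of_neg h]
  -- choose constants
  obtain ⟨c, hc⟩ := exists_nat_ge (4 * (d : ℝ) / β)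
  set cR : ℝ := (c : ℝ) + 1 with hcRdef
  have hcR1 : 1 ≤ cR := by have : (0:ℝ) ≤ c := Nat.cast_nonneg c; rw [hcRdef]; linarith
  have hcRd : cR * (β - η) ≥ (d : ℝ) * (1 + η) := by
    have h1 : β - η ≥ β / 2 := by linarith
    have h2 : cR ≥ 4 * (d : ℝ) / β := by linarith
    have h3 : cR * (β - η) ≥ (4 * (d : ℝ) / β) * (β / 2) := by
      apply mul_le_mul h2 h1 (by linarith) (by positivity)
    have h4 : (4 * (d : ℝ) / β) * (β / 2) = 2 * d := by field_simp; ring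
    nlinarith [Nat.cast_nonneg (α := ℝ) d]
  obtain ⟨R₂, hR₂⟩ := exists_nat_ge (2 * ((d : ℝ) + cR) / η + 1)
  have hdcR : (1:ℝ) ≤ (d : ℝ) + cR := by have : (0:ℝ) ≤ d := Nat.cast_nonneg d; linarith
  have hR₂η : (R₂ : ℝ) * η / 2 > (d : ℝ) + cR := by
    have h1 : (R₂:ℝ) ≥ 2 * ((d : ℝ) + cR) / η + 1 := hR₂
    have h2 : (R₂:ℝ) * η ≥ (2 * ((d : ℝ) + cR) / η + 1) * η :=
      mul_le_mul_of_nonneg_right h1 (le_of_lt hη0)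
    have h3 : (2 * ((d : ℝ) + cR) / η) * η = 2 * ((d:ℝ) + cR) := by field_simp
    nlinarith
  have hR₂big : (R₂ : ℝ) ≥ 2 * ((d:ℝ) + cR) + 2 := by nlinarith
  have hR₂1 : (1:ℝ) ≤ R₂ := by nlinarith
  -- the generating set
  set G : Set (Fin d → ℤ) := {g | N1 g ≤ (R₂ : ℝ) ∧ ⟪intVec g, v⟫ < 0} with hGdef
  refine ⟨G, Set.Finite.subset (finite_N1_le (R₂ : ℝ)) (fun g hg => hg.1),
    fun g hg => hg.2, ?_⟩
  -- main induction
  suffices h : ∀ k : ℕ, ∀ n : Fin d → ℤ, n ≠ 0 → ⟪intVec n, v⟫ ≤ -η * N1 n →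
      N1 n ≤ (k : ℝ) → n ∈ AddSubmonoid.closure G by
    intro n hn hcone
    obtain ⟨k, hk⟩ := exists_nat_ge (N1 n)
    exact h k n hn hcone hk
  have hsmall : ∀ n : Fin d → ℤ, n ≠ 0 → ⟪intVec n, v⟫ ≤ -η * N1 n →
      N1 n ≤ (R₂ : ℝ) → n ∈ AddSubmonoid.closure G := by
    intro n hn hcone hN
    apply AddSubmonoid.subset_closure
    refine ⟨hN, lt_of_le_of_lt hcone ?_⟩
    have := one_le_N1 hn
    nlinarith
  intro k
  induction k with
  | zero =>
    intro n hn hcone hN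
    exact absurd (le_trans (one_le_N1 hn) hN) (by norm_num)
  | succ k ih =>
    intro n hn hcone hN
    by_cases hcase : N1 n ≤ (R₂ : ℝ)
    · exact hsmall n hn hcone hcase
    push_neg at hcase
    set L : ℝ := N1 n with hLdef
    have hL0 : 0 < L := by nlinarith
    set q : ℝ := (R₂ : ℝ) / (2 * L) with hqdef
    have hq0 : 0 < q := by positivity
    have hq2 : q < 1 / 2 := by
      rw [hqdef, div_lt_iff₀ (by linarith)]
      nlinarith
    have hqL : q * L = (R₂ : ℝ) / 2 := by
      rw [hqdef]; field_simp
    -- define g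
    set g : Fin d → ℤ := fun i => ⌊q * (n i : ℝ)⌋ with hgdef
    have hgle : ∀ i, (g i : ℝ) ≤ q * (n i : ℝ) := fun i => Int.floor_le _
    have hglt : ∀ i, q * (n i : ℝ) < (g i : ℝ) + 1 := fun i => Int.lt_floor_add_one _
    have hgabs : ∀ i, |(g i : ℝ)| ≤ q * |(n i : ℝ)| + 1 := by
      intro i
      rcases le_or_gt 0 (q * (n i : ℝ)) with h | h
      · rw [abs_le]
        constructor
        · nlinarith [hglt i, abs_nonneg ((n i : ℝ))]
        · calc (g i : ℝ) ≤ q * (n i : ℝ) := hgle i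
            _ ≤ q * |(n i : ℝ)| := by
              apply mul_le_mul_of_nonneg_left (le_abs_self _) (le_of_lt hq0)
            _ ≤ q * |(n i : ℝ)| + 1 := by linarith
      · rw [abs_le]
        have habs : q * |(n i : ℝ)| = - (q * (n i : ℝ)) := by
          have : (n i : ℝ) < 0 := by nlinarith
          rw [abs_of_neg this]; ring
        constructor
        · rw [habs]; nlinarith [hgle i, hglt i, h]
        · rw [habs]; nlinarith [hgle i, hglt i, h]
    have hgerr : ∀ i, |q * (n i : ℝ) - (g i : ℝ)| ≤ 1 := by
      intro i
      rw [abs_le]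
      constructor
      · nlinarith [hgle i]
      · nlinarith [hglt i]
    have hN1g : N1 g ≤ (R₂ : ℝ) / 2 + d := by
      have : N1 g ≤ ∑ _i : Fin d, (1 : ℝ) + q * N1 n := by
        rw [N1, N1, Finset.mul_sum, ← Finset.sum_add_distrib]
        exact Finset.sum_le_sum fun i _ => by linarith [hgabs i]
      simp only [Finset.sum_const, Finset.card_univ, Fintype.card_fin, nsmul_eq_mul,
        mul_one] at this
      rw [← hLdef] at this
      nlinarith
    have hφg : |⟪intVec g, v⟫ - q * ⟪intVec n, v⟫| ≤ d := by
      rw [inner_intVec, inner_intVec, Finset.mul_sum]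
      rw [← Finset.sum_sub_distrib]
      calc |∑ i, ((g i : ℝ) * v i - q * ((n i : ℝ) * v i))|
          ≤ ∑ i, |(g i : ℝ) * v i - q * ((n i : ℝ) * v i)| := Finset.abs_sum_le_sum_abs _ _
        _ ≤ ∑ _i : Fin d, (1:ℝ) := Finset.sum_le_sum fun i _ => by
            have : (g i : ℝ) * v i - q * ((n i : ℝ) * v i) = ((g i : ℝ) - q * (n i : ℝ)) * v i := by
              ring
            rw [this, abs_mul]
            have h1 : |(g i : ℝ) - q * (n i : ℝ)| ≤ 1 := by
              rw [abs_sub_comm]; exact hgerr i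
            have h2 := abs_coord_le_one hv i
            nlinarith [abs_nonneg ((g i : ℝ) - q * (n i : ℝ)), abs_nonneg (v i)]
        _ = d := by simp
    -- the tilted generator
    set gc : Fin d → ℤ := g + Pi.single i₀ (s * (c + 1)) with hgcdef
    have hφsingle : ⟪intVec (Pi.single i₀ (s * (c+1))), v⟫ = cR * β := by
      rw [phi_single]
      have hcast : ((s * ((c:ℤ)+1) : ℤ) : ℝ) = (s:ℝ) * cR := by
        rw [hcRdef]; push_cast; ring
      rw [hcast]
      calc (s:ℝ) * cR * v i₀ = cR * ((s:ℝ) * v i₀) := by ring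
        _ = cR * β := by rw [hsv]
    have hN1single : N1 (Pi.single i₀ (s * (c+1))) = cR := by
      rw [N1_single]
      have h1 : |((s * ((c:ℤ)+1) : ℤ) : ℝ)| = |(s:ℝ)| * |(c:ℝ)+1| := by
        push_cast; rw [abs_mul]
      rw [h1]
      have h2 : |(s:ℝ)| = 1 := by
        rw [hsdef]
        by_cases h : 0 ≤ v i₀ <;> simp [h]
      have h3 : |(c:ℝ)+1| = (c:ℝ)+1 := abs_of_nonneg (by positivity)
      rw [h2, h3, one_mul, hcRdef]
    have hφgc : ⟪intVec gc, v⟫ = ⟪intVec g, v⟫ + cR * β := by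
      rw [hgcdef, phi_add, hφsingle]
    have hqφn : q * ⟪intVec n, v⟫ ≤ -η * ((R₂:ℝ)/2) := by
      have := mul_le_mul_of_nonneg_left hcone (le_of_lt hq0)
      calc q * ⟪intVec n, v⟫ ≤ q * (-η * N1 n) := this
        _ = -η * (q * L) := by rw [hLdef]; ring
        _ = -η * ((R₂:ℝ)/2) := by rw [hqL]
    have hgcG : gc ∈ G := by
      constructor
      · calc N1 gc ≤ N1 g + N1 (Pi.single i₀ (s * (c+1))) := N1_add_le _ _
          _ ≤ (R₂:ℝ)/2 + d + cR := by rw [hN1single]; linarith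
          _ ≤ R₂ := by nlinarith
      · rw [hφgc]
        have h1 : ⟪intVec g, v⟫ ≤ q * ⟪intVec n, v⟫ + d := by
          have := abs_le.1 hφg
          linarith [this.2]
        have h2 : cR * β ≤ cR := by nlinarith
        calc ⟪intVec g, v⟫ + cR * β ≤ q * ⟪intVec n, v⟫ + d + cR := by linarith
          _ ≤ -η * ((R₂:ℝ)/2) + d + cR := by linarith
          _ < 0 := by nlinarith
    -- the remainder
    set n' : Fin d → ℤ := n - gc with hn'def
    have hnsplit : n = gc + n' := by rw [hn'def]; abel
    by_cases hn'0 : n' = 0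
    · rw [hn'0, add_zero] at hnsplit
      rw [hnsplit]
      exact AddSubmonoid.subset_closure hgcG
    have hN1n' : N1 n' ≤ (1 - q) * L + d + cR := by
      have hng : N1 (n - g) ≤ (1 - q) * L + d := by
        have : N1 (n - g) ≤ ∑ _i : Fin d, (1:ℝ) + (1 - q) * N1 n := by
          rw [N1, N1, Finset.mul_sum, ← Finset.sum_add_distrib]
          refine Finset.sum_le_sum fun i _ => ?_
          show |(((n - g) i : ℤ) : ℝ)| ≤ _
          have h2 : ((n - g) i : ℤ) = n i - g i := rfl
          rw [h2]
          push_cast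
          have h3 : (n i : ℝ) - g i = ((n i : ℝ) - q * n i) + (q * n i - g i) := by ring
          rw [h3]
          have h4 : |(n i : ℝ) - q * n i| = (1 - q) * |(n i:ℝ)| := by
            rw [show (n i : ℝ) - q * n i = (1 - q) * (n i : ℝ) by ring, abs_mul,
              abs_of_nonneg (by linarith : (0:ℝ) ≤ 1 - q)]
          calc |((n i : ℝ) - q * n i) + (q * n i - g i)|
              ≤ |(n i : ℝ) - q * n i| + |q * n i - g i| := abs_add_le _ _
            _ ≤ (1 - q) * |(n i:ℝ)| + 1 := by rw [h4]; linarith [hgerr i]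
            _ = 1 + (1-q) * |(n i:ℝ)| := by ring
        simp only [Finset.sum_const, Finset.card_univ, Fintype.card_fin, nsmul_eq_mul,
          mul_one] at this
        rw [← hLdef] at this
        linarith
      have : n' = (n - g) - Pi.single i₀ (s * (c+1)) := by rw [hn'def, hgcdef]; abel
      rw [this]
      have hsub : N1 ((n - g) - Pi.single i₀ (s * (c+1))) ≤ N1 (n - g) + N1 (Pi.single i₀ (s * (c+1))) := by
        have h1 := N1_add_le (n - g) (-(Pi.single i₀ (s * (c+1))))
        rw [N1_neg] at h1
        rw [sub_eq_add_neg]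
        exact h1
      rw [hN1single] at hsub
      linarith
    have hN1n'k : N1 n' ≤ (k : ℝ) := by
      have h1 : (1 - q) * L = L - (R₂:ℝ)/2 := by
        have : (1 - q) * L = L - q * L := by ring
        rw [this, hqL]
      have h2 : N1 n' ≤ L - (R₂:ℝ)/2 + d + cR := by rw [h1] at hN1n'; linarith
      have h3 : L ≤ (k:ℝ) + 1 := by exact_mod_cast hN
      nlinarith
    have hφn' : ⟪intVec n', v⟫ ≤ -η * N1 n' := by
      have h1 : ⟪intVec n', v⟫ = ⟪intVec n, v⟫ - ⟪intVec g, v⟫ - cR * β := by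
        rw [hn'def, phi_sub, hφgc]; ring
      have h2 : ⟪intVec g, v⟫ ≥ q * ⟪intVec n, v⟫ - d := by
        have := abs_le.1 hφg
        linarith [this.1]
      have h3 : ⟪intVec n', v⟫ ≤ (1 - q) * ⟪intVec n, v⟫ + d - cR * β := by
        rw [h1]; nlinarith
      have h4 : (1 - q) * ⟪intVec n, v⟫ ≤ -η * ((1 - q) * L) := by
        have hq1 : (0:ℝ) ≤ 1 - q := by linarith
        have := mul_le_mul_of_nonneg_left hcone hq1
        calc (1 - q) * ⟪intVec n, v⟫ ≤ (1 - q) * (-η * N1 n) := this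
          _ = -η * ((1 - q) * L) := by rw [hLdef]; ring
      have h5 : (d:ℝ) - cR * β ≤ -η * ((d:ℝ) + cR) := by nlinarith
      have h6 : ⟪intVec n', v⟫ ≤ -η * ((1 - q) * L + d + cR) := by
        calc ⟪intVec n', v⟫ ≤ -η * ((1 - q) * L) + (d - cR * β) := by linarith
          _ ≤ -η * ((1 - q) * L) + -η * ((d:ℝ) + cR) := by linarith
          _ = -η * ((1 - q) * L + d + cR) := by ring
      calc ⟪intVec n', v⟫ ≤ -η * ((1 - q) * L + d + cR) := h6
        _ ≤ -η * N1 n' := by nlinarith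
    have hn'mem := ih n' hn'0 hφn' hN1n'k
    rw [hnsplit]
    exact AddSubmonoid.add_mem _ (AddSubmonoid.subset_closure hgcG) hn'mem

set_option maxHeartbeats 1000000 in
/-- Let `M` be a Noetherian `R_d`-module and `H = H_v` a half-space in
`ℝ^d`.  If the algebraic `ℤ^d`-action `α_M` on `X_M` is expansive along `H`, then `M`
is `R_H`-Noetherian. -/
theorem noetherianOver_of_expansive_half {d : ℕ} (M : Type*) [AddCommGroup M]
    [Module (LaurentRing d) M] [IsNoetherian (LaurentRing d) M]
    (v : Rspace d) (hv : ‖v‖ = 1)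
    (ρ : (M →+ AddCircle (1 : ℝ)) → (M →+ AddCircle (1 : ℝ)) → ℝ)
    (hρ : IsCompatibleInvariantMetric (M →+ AddCircle (1 : ℝ)) ρ)
    (hexp : DualExpansiveHalf M ρ v) :
    NoetherianOver (RH v) M := by
  classical
  obtain ⟨ε, hε, hexp⟩ := hexp
  haveI : CompactSpace (M →+ AddCircle (1:ℝ)) := compactX
  -- a coordinate where v is nonzero
  obtain ⟨i₀, hi₀⟩ : ∃ i, v i ≠ 0 := by
    by_contra h
    push_neg at h
    have : v = 0 := by ext i; exact h i
    rw [this, norm_zero] at hv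
    norm_num at hv
  have hβ0 : 0 < |v i₀| := abs_pos.2 hi₀
  -- a strictly negative direction
  set b₀ : Fin d → ℤ := Pi.single i₀ (if 0 ≤ v i₀ then -1 else 1) with hb₀
  have hφb₀ : ⟪intVec b₀, v⟫ = -|v i₀| := by
    rw [hb₀, phi_single]
    by_cases h : 0 ≤ v i₀
    · simp [h, abs_of_nonneg h]
    · push_neg at h
      simp [not_le.mpr h, abs_of_neg h]
  have hb₀neg : ⟪intVec b₀, v⟫ < 0 := by rw [hφb₀]; linarith
  have hN1b₀ : N1 b₀ = 1 := by
    rw [hb₀, N1_single]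
    by_cases h : 0 ≤ v i₀ <;> simp [h]
  -- strict-halfspace expansiveness
  have hstrict : ∀ χ : M →+ AddCircle (1:ℝ),
      (∀ n : Fin d → ℤ, ⟪intVec n, v⟫ < 0 → ρ 0 (dualAut M n χ) ≤ ε) → χ = 0 := by
    intro χ h
    have h2 : dualAut M b₀ χ = 0 := by
      apply hexp (dualAut M b₀ χ) 0
      intro n hn
      rw [dualAut_zero_char, dualAut_dualAut]
      have hlt : ⟪intVec (b₀ + n), v⟫ < 0 := by
        rw [phi_add]; linarith
      have h3 := h _ hlt
      rw [hρ.symm (0 : M →+ AddCircle (1:ℝ)) (dualAut M (b₀ + n) χ)] at h3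
      exact h3
    exact dualAut_eq_zero h2
  -- the ε-ball about 0 and its basic neighbourhood
  have h00 : ρ 0 (0 : M →+ AddCircle (1:ℝ)) = 0 := (hρ.eq_iff 0 0).2 rfl
  set V : Set (M →+ AddCircle (1:ℝ)) := {ψ | ρ 0 ψ < ε} with hV
  have hVopen : IsOpen V := hρ.isOpen_ball 0 ε
  have h0V : (0 : M →+ AddCircle (1:ℝ)) ∈ V := by
    show ρ 0 0 < ε
    rw [h00]; exact hε
  obtain ⟨t, htopen, htpre⟩ := isOpen_induced_iff.1 hVopen
  have h0t : (fun χ : M →+ AddCircle (1:ℝ) => (χ : M → AddCircle (1:ℝ))) 0 ∈ t := by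
    rw [← Set.mem_preimage, htpre]
    exact h0V
  obtain ⟨F, u, hu, hpi⟩ := isOpen_pi_iff.1 htopen _ h0t
  have hQ : ∀ ψ : M →+ AddCircle (1:ℝ), (∀ m ∈ F, ψ m = 0) → ρ 0 ψ < ε := by
    intro ψ hψ
    have hmem : (ψ : M → AddCircle (1:ℝ)) ∈ (F : Set M).pi u := by
      intro m hm
      have h0u : (0 : AddCircle (1:ℝ)) ∈ u m := by
        have := (hu m hm).2
        simpa using this
      show ψ m ∈ u m
      rw [hψ m hm]
      exact h0u
    have h2 : (ψ : M → AddCircle (1:ℝ)) ∈ t := hpi hmem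
    have h3 : ψ ∈ (fun χ : M →+ AddCircle (1:ℝ) => (χ : M → AddCircle (1:ℝ))) ⁻¹' t := h2
    rw [htpre] at h3
    exact h3
  -- compactness: finite window
  set C : {n : Fin d → ℤ // ⟪intVec n, v⟫ < 0} → Set (M →+ AddCircle (1:ℝ)) :=
    fun i => (dualAut M i.1) ⁻¹' {ψ | ρ 0 ψ ≤ ε} with hC
  have hCclosed : ∀ i, IsClosed (C i) := fun i =>
    (hρ.isClosed_cball 0 ε).preimage (dualAut_continuous i.1)
  have hVc : IsCompact Vᶜ := hVopen.isClosed_compl.isCompact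
  have hempty : (Vᶜ ∩ ⋂ i, C i) = ∅ := by
    rw [Set.eq_empty_iff_forall_notMem]
    rintro χ ⟨hχc, hχi⟩
    rw [Set.mem_iInter] at hχi
    have : χ = 0 := hstrict χ (fun n hn => hχi ⟨n, hn⟩)
    rw [this] at hχc
    exact hχc h0V
  obtain ⟨t₀, ht₀⟩ := hVc.elim_finite_subfamily_closed C hCclosed hempty
  set E : Finset {n : Fin d → ℤ // ⟪intVec n, v⟫ < 0} := insert ⟨b₀, hb₀neg⟩ t₀ with hE
  have hP : ∀ χ : M →+ AddCircle (1:ℝ),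
      (∀ i ∈ E, ρ 0 (dualAut M i.1 χ) ≤ ε) → ρ 0 χ < ε := by
    intro χ hχ
    by_contra hc
    have hmem : χ ∈ Vᶜ ∩ ⋂ i ∈ t₀, C i := by
      refine ⟨hc, ?_⟩
      rw [Set.mem_iInter₂]
      exact fun i hi => hχ i (Finset.mem_insert_of_mem hi)
    rw [ht₀] at hmem
    exact hmem
  have hEne : E.Nonempty := ⟨_, Finset.mem_insert_self _ _⟩
  -- the constants
  obtain ⟨imin, himin, hminle⟩ := Finset.exists_min_image E (fun i => -⟪intVec i.1, v⟫) hEne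
  set μ : ℝ := -⟪intVec imin.1, v⟫ with hμ
  have hμle : ∀ i ∈ E, μ ≤ -⟪intVec i.1, v⟫ := fun i hi => hminle i hi
  have hμ0 : 0 < μ := by
    have := imin.2
    rw [hμ]
    linarith
  set R : ℝ := 1 + ∑ i ∈ E, N1 i.1 with hR
  have hRge : ∀ i ∈ E, N1 i.1 ≤ R := by
    intro i hi
    have h1 : N1 i.1 ≤ ∑ j ∈ E, N1 j.1 :=
      Finset.single_le_sum (fun j _ => N1_nonneg j.1) hi
    rw [hR]
    linarith
  have hR1 : 1 ≤ R := by
    rw [hR]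
    have : (0:ℝ) ≤ ∑ i ∈ E, N1 i.1 := Finset.sum_nonneg fun j _ => N1_nonneg j.1
    linarith
  set η : ℝ := min (μ / (2*R)) (|v i₀| / 2) with hηdef
  have hη0 : 0 < η := lt_min (by positivity) (by positivity)
  have hηβ : 2 * (η/2) ≤ |v i₀| := by
    have := min_le_right (μ / (2*R)) (|v i₀| / 2)
    rw [← hηdef] at this
    linarith
  have hημ : η * R ≤ μ / 2 := by
    have h1 : η ≤ μ / (2*R) := by rw [hηdef]; exact min_le_left _ _
    have h2 : η * R ≤ (μ / (2*R)) * R := mul_le_mul_of_nonneg_right h1 (by linarith)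
    have h3 : (μ / (2*R)) * R = μ / 2 := by field_simp
    linarith
  obtain ⟨G, hGfin, hGneg, hGcone⟩ := cone_generation v hv i₀ (η/2) (by positivity) hηβ
  -- the subring
  set S : Subring (LaurentRing d) := Subring.closure ((fun g => mono g) '' G) with hS
  haveI hSnoeth : IsNoetherianRing S := is_noetherian_subring_closure _ (hGfin.image _)
  have hSle : S ≤ RH v := by
    rw [hS]
    apply Subring.closure_le.2
    rintro f ⟨g, hg, rfl⟩
    exact Subring.subset_closure ⟨g, le_of_lt (hGneg g hg), rfl⟩
  have hmonoS : ∀ n ∈ AddSubmonoid.closure G, mono n ∈ S := by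
    intro n hn
    induction hn using AddSubmonoid.closure_induction with
    | mem x hx => exact Subring.subset_closure ⟨x, hx, rfl⟩
    | zero => rw [mono_zero]; exact one_mem S
    | add x y hx hy ihx ihy =>
      rw [← mono_mul]
      exact mul_mem ihx ihy
  letI : Module S M := Module.compHom M S.subtype
  have hNtop : Submodule.span S (↑F : Set M) = ⊤ := by
    by_contra hne
    obtain ⟨a, ha⟩ : ∃ a : M, a ∉ Submodule.span S (↑F : Set M) := by
      by_contra h
      push_neg at h
      exact hne (Submodule.eq_top_iff'.2 h)
    set NN := (Submodule.span S (↑F : Set M)).toAddSubgroup with hNN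
    have hqa : (QuotientAddGroup.mk' NN) a ≠ 0 :=
      fun h => ha ((QuotientAddGroup.eq_zero_iff a).1 h)
    obtain ⟨χ₀, hχ₀⟩ := exists_real_char hqa
    set χ : M →+ AddCircle (1:ℝ) := χ₀.comp (QuotientAddGroup.mk' NN) with hχ
    have hχa : χ a ≠ 0 := hχ₀
    have hχN : ∀ x ∈ Submodule.span S (↑F : Set M), χ x = 0 := by
      intro x hx
      have h1 : (QuotientAddGroup.mk' NN) x = 0 := (QuotientAddGroup.eq_zero_iff x).2 hx
      show χ₀ ((QuotientAddGroup.mk' NN) x) = 0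
      rw [h1, map_zero]
    have hvanish : ∀ n ∈ AddSubmonoid.closure G, ∀ m ∈ F, dualAut M n χ m = 0 := by
      intro n hn m hm
      rw [dualAut_apply]
      apply hχN
      have heq : mono n • m = (⟨mono n, hmonoS n hn⟩ : S) • m := rfl
      rw [heq]
      exact Submodule.smul_mem _ _ (Submodule.subset_span hm)
    -- descent
    set B := {n : Fin d → ℤ | ⟪intVec n, v⟫ < 0 ∧ ε ≤ ρ 0 (dualAut M n χ)} with hB
    have hBstep : ∀ n ∈ B, ∃ i ∈ E, (n + i.1 ∈ B ∧
        ⟪intVec (n + i.1), v⟫ ≤ ⟪intVec n, v⟫ - μ ∧ N1 (n + i.1) ≤ N1 n + R) := by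
      intro n hn
      have hnotV : ¬ (ρ 0 (dualAut M n χ) < ε) := not_lt.2 hn.2
      have hex : ¬ ∀ i ∈ E, ρ 0 (dualAut M i.1 (dualAut M n χ)) ≤ ε :=
        fun h => hnotV (hP _ h)
      push_neg at hex
      obtain ⟨i, hiE, hi⟩ := hex
      refine ⟨i, hiE, ⟨⟨?_, ?_⟩, ?_, ?_⟩⟩
      · rw [phi_add]
        have := i.2
        linarith [hn.1]
      · rw [← dualAut_dualAut]
        exact le_of_lt hi
      · rw [phi_add]
        have := hμle i hiE
        linarith
      · calc N1 (n + i.1) ≤ N1 n + N1 i.1 := N1_add_le _ _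
          _ ≤ N1 n + R := by linarith [hRge i hiE]
    have hBempty : ∀ n₀, n₀ ∉ B := by
      intro n₀ hn₀
      have hseq : ∀ k : ℕ, ∃ n, n ∈ B ∧
          ⟪intVec n, v⟫ ≤ ⟪intVec n₀, v⟫ - k * μ ∧ N1 n ≤ N1 n₀ + k * R := by
        intro k
        induction k with
        | zero => exact ⟨n₀, hn₀, by simp, by simp⟩
        | succ k ih =>
          obtain ⟨n, hnB, h1, h2⟩ := ih
          obtain ⟨i, hiE, hmem, hφ, hN⟩ := hBstep n hnB
          refine ⟨n + i.1, hmem, ?_, ?_⟩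
          · push_cast
            linarith
          · push_cast
            linarith
      obtain ⟨k, hk⟩ := exists_nat_ge ((⟪intVec n₀, v⟫ + (η/2) * N1 n₀) / (3*μ/4))
      have hk' : ⟪intVec n₀, v⟫ + (η/2) * N1 n₀ ≤ k * (3*μ/4) := by
        rw [div_le_iff₀ (by positivity)] at hk
        linarith
      obtain ⟨n, hnB, h1, h2⟩ := hseq k
      have hland : ⟪intVec n, v⟫ ≤ -(η/2) * N1 n := by
        have hb1 : (η/2) * (N1 n₀ + k * R) ≤ (η/2) * N1 n₀ + k * (μ/4) := by
          have : (η/2) * (k * R) ≤ k * (μ/4) := by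
            have h3 : η * R ≤ μ/2 := hημ
            have h4 : (0:ℝ) ≤ k := Nat.cast_nonneg k
            nlinarith
          nlinarith [N1_nonneg n₀]
        have hb2 : -(η/2) * (N1 n₀ + k * R) ≤ -(η/2) * N1 n := by
          have := mul_le_mul_of_nonneg_left h2 (by positivity : (0:ℝ) ≤ η/2)
          linarith
        have hb3 : ⟪intVec n₀, v⟫ - k * μ ≤ -(η/2) * (N1 n₀ + k * R) := by
          nlinarith
        calc ⟪intVec n, v⟫ ≤ ⟪intVec n₀, v⟫ - k * μ := h1
          _ ≤ -(η/2) * (N1 n₀ + k * R) := hb3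
          _ ≤ -(η/2) * N1 n := hb2
      have hnne : n ≠ 0 := by
        intro h0
        rw [h0, phi_zero] at h1
        have : (0:ℝ) ≤ k * μ := by positivity
        have hn₀φ := hn₀.1
        linarith
      have hmemG := hGcone n hnne hland
      have hvan : ∀ m ∈ F, dualAut M n χ m = 0 := hvanish n hmemG
      have hlt : ρ 0 (dualAut M n χ) < ε := hQ _ hvan
      exact absurd hlt (not_lt.2 hnB.2)
    have hχ0 : χ = 0 := by
      apply hstrict
      intro n hn
      by_contra h
      exact hBempty n ⟨hn, le_of_lt (not_le.1 h)⟩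
    rw [hχ0] at hχa
    exact hχa rfl
  -- endgame
  haveI : Module.Finite S M := ⟨⟨F, hNtop⟩⟩
  haveI hNoeS : IsNoetherian S M := isNoetherian_of_isNoetherianRing_of_finite S M
  show (letI : Module (RH v) M := Module.compHom M (RH v).subtype; IsNoetherian (RH v) M)
  letI : Module (RH v) M := Module.compHom M (RH v).subtype
  have wfS : WellFounded ((· > ·) : Submodule S M → Submodule S M → Prop) :=
    isNoetherian_iff.mp hNoeS
  let Φ : Submodule (RH v) M → Submodule S M := fun P =>
    { carrier := (P : Set M)
      add_mem' := fun ha hb => P.add_mem ha hb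
      zero_mem' := P.zero_mem
      smul_mem' := fun sc x hx => by
        show sc • x ∈ (P : Set M)
        have heq : sc • x = ((⟨sc.1, hSle sc.2⟩ : RH v) • x : M) := rfl
        rw [heq]
        exact P.smul_mem _ hx }
  have hΦmem : ∀ (P : Submodule (RH v) M) (x : M), x ∈ Φ P ↔ x ∈ P := fun _ _ => Iff.rfl
  rw [isNoetherian_iff]
  refine Subrelation.wf (r := InvImage (· > ·) Φ) ?_ (InvImage.wf Φ wfS)
  intro P Q hPQ
  have hle : Φ Q ≤ Φ P := by
    intro x hx
    rw [hΦmem] at hx ⊢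
    exact hPQ.le hx
  have hne : Φ Q ≠ Φ P := by
    intro h
    apply hPQ.ne'
    apply le_antisymm
    · intro x hx
      have : x ∈ Φ P := (hΦmem P x).2 hx
      rw [h.symm] at this
      exact (hΦmem Q x).1 this
    · intro x hx
      have : x ∈ Φ Q := (hΦmem Q x).2 hx
      rw [h] at this
      exact (hΦmem P x).1 this
  exact lt_of_le_of_ne hle hne
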